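/- The assignment a⊗b ↦ tr(ab) defines a linear isomorphism from F(A) = (A⊗A)/⟨a⊗b − b⊗a, a⊗bc − ab⊗c⟩ onto the trace space tr(A) = A/[A,A], where A = ℝ⟨x,y⟩ is the free associative algebra and [A,A] is the subspace spanned by commutators ab − ba. -/
import Mathlib


noncomputable section
open TensorProduct

abbrev A : Type := FreeAlgebra ℝ (Fin 2)
abbrev B : Type := A ⊗[ℝ] A

def X : A := FreeAlgebra.ι ℝ 0
def Y : A := FreeAlgebra.ι ℝ 1

/-- Generator matrices used to define the noncommutative partial derivative `pd d`. -/
def genMat (d i : Fin 2) : Matrix (Fin 2) (Fin 2) B :=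
  !![(Algebra.TensorProduct.includeLeft : A →ₐ[ℝ] B) (FreeAlgebra.ι ℝ i), if i = d then 1 else 0;
     0, Algebra.TensorProduct.includeRight (FreeAlgebra.ι ℝ i)]

def Φmat (d : Fin 2) : A →ₐ[ℝ] Matrix (Fin 2) (Fin 2) B :=
  FreeAlgebra.lift ℝ (genMat d)

/-- The noncommutative partial derivative `∂_x` (for `d = 0`) resp. `∂_y` (for `d = 1`):
on a monomial it splits the word at each occurrence of the letter `d`. -/
def pd (d : Fin 2) (a : A) : B := Φmat d a 0 1

/-- The subspace of relations defining `F(A) = (A ⊗ A)/⟨a⊗b − b⊗a, a⊗bc − ab⊗c⟩`. -/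
def FArel : Submodule ℝ B :=
  Submodule.span ℝ
    ({t | ∃ a b : A, t = a ⊗ₜ[ℝ] b - b ⊗ₜ[ℝ] a} ∪
     {t | ∃ a b c : A, t = a ⊗ₜ[ℝ] (b * c) - (a * b) ⊗ₜ[ℝ] c})

/-- The subspace `[A,A]` spanned by commutators; `tr(A) = A/[A,A]` is the trace space. -/
def commSub : Submodule ℝ A := Submodule.span ℝ {p : A | ∃ a b : A, p = a * b - b * a}

/-- The assignment `a ⊗ b ↦ tr(ab)` defines a linear isomorphism
`F(A) = (A⊗A)/⟨a⊗b − b⊗a, a⊗bc − ab⊗c⟩ ≅ A/[A,A]`. -/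

def mulMap : B →ₗ[ℝ] (A ⧸ commSub) := commSub.mkQ.comp (LinearMap.mul' ℝ A)

lemma FArel_le_ker : FArel ≤ LinearMap.ker mulMap := by
  rw [FArel, Submodule.span_le]
  rintro t (⟨a, b, rfl⟩ | ⟨a, b, c, rfl⟩) <;>
    simp only [SetLike.mem_coe, LinearMap.mem_ker, mulMap, LinearMap.comp_apply, map_sub,
      LinearMap.mul'_apply, Submodule.mkQ_apply, ← Submodule.Quotient.mk_sub,
      Submodule.Quotient.mk_eq_zero]
  · exact Submodule.subset_span ⟨a, b, rfl⟩
  · simp [mul_assoc]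

def tenMap : A →ₗ[ℝ] (B ⧸ FArel) := FArel.mkQ.comp ((TensorProduct.mk ℝ A A).flip 1)

lemma key (a b : A) :
    (Submodule.Quotient.mk ((a * b) ⊗ₜ[ℝ] (1:A)) : B ⧸ FArel) =
      Submodule.Quotient.mk (a ⊗ₜ[ℝ] b) := by
  rw [eq_comm, Submodule.Quotient.eq]
  have h : a ⊗ₜ[ℝ] b - (a * b) ⊗ₜ[ℝ] (1:A) = a ⊗ₜ[ℝ] (b * 1) - (a * b) ⊗ₜ[ℝ] (1:A) := by
    rw [mul_one]
  rw [h]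
  exact Submodule.subset_span (Or.inr ⟨a, b, 1, rfl⟩)

lemma commSub_le_ker : commSub ≤ LinearMap.ker tenMap := by
  rw [commSub, Submodule.span_le]
  rintro t ⟨a, b, rfl⟩
  simp only [SetLike.mem_coe, LinearMap.mem_ker, tenMap, LinearMap.comp_apply, map_sub,
    LinearMap.flip_apply, TensorProduct.mk_apply, Submodule.mkQ_apply,
    ← Submodule.Quotient.mk_sub]
  rw [Submodule.Quotient.mk_sub, key a b, key b a, ← Submodule.Quotient.mk_sub,
    Submodule.Quotient.mk_eq_zero]
  exact Submodule.subset_span (Or.inl ⟨a, b, rfl⟩)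

theorem FA_iso_trace :
    ∃ e : (B ⧸ FArel) ≃ₗ[ℝ] (A ⧸ commSub),
      ∀ a b : A,
        e (Submodule.Quotient.mk (a ⊗ₜ[ℝ] b)) = Submodule.Quotient.mk (a * b) := by

  refine ⟨LinearEquiv.ofLinear (FArel.liftQ mulMap FArel_le_ker)
    (commSub.liftQ tenMap commSub_le_ker) ?_ ?_, ?_⟩
  · refine Submodule.linearMap_qext _ (LinearMap.ext fun a => ?_)
    simp [tenMap, mulMap]
  · refine Submodule.linearMap_qext _ (TensorProduct.ext' fun a b => ?_)
    simp only [LinearMap.comp_apply, Submodule.mkQ_apply, Submodule.liftQ_apply, mulMap,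
      LinearMap.mul'_apply, tenMap, LinearMap.flip_apply, TensorProduct.mk_apply,
      LinearMap.id_apply]
    exact key a b
  · intro a b
    simp [mulMap]
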